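/- Let k ≥ 1 and let p : Fin k → ℝ satisfy p j > 0 for all j and ∑ j, p j = 1. Let Γ = diagonal p, Σ the matrix with entries Σ_{ij} = p i·(if i = j then 1 else 0) − p i·p j, and Ω = 1 − vecMulVec (√p) (√p) where (√p) j = Real.sqrt (p j). Then (i) Γ^{−1/2} * Σ * Γ^{−1/2} = Ω, where Γ^{−1/2} = diagonal (fun j => 1/Real.sqrt (p j)); (ii) Ω is idempotent: Ω * Ω = Ω; and (iii) trace Ω = k − 1. -/

import Mathlib

/-! The covariance matrix is `Σ = diagonal p - p pᵀ`, so conjugating it by `Γ^(-1/2)` gives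
`1 - √p √pᵀ`. Because `∑ p = 1`, `√p` is a unit vector, hence `√p √pᵀ` is an idempotent of
trace `1`, and so is its complement `Ω`, now of trace `k - 1`. -/

open Matrix

section

variable {n R : Type*} [Fintype n] [CommRing R]

theorem isIdempotentElem_vecMulVec_self {v : n → R} (hv : v ⬝ᵥ v = 1) :
    IsIdempotentElem (vecMulVec v v) := by
  rw [IsIdempotentElem, vecMulVec_mul_vecMulVec, hv, one_smul]

variable [DecidableEq n]

theorem diagonal_mul_vecMulVec_mul_diagonal (d u v e : n → R) :
    diagonal d * vecMulVec u v * diagonal e = vecMulVec (d * u) (v * e) := by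
  ext i j
  simp only [mul_diagonal, diagonal_mul, vecMulVec_apply, Pi.mul_apply]
  ring

theorem diagonal_mul_sub_vecMulVec_mul_diagonal (d p : n → R) :
    diagonal d * (diagonal p - vecMulVec p p) * diagonal d
      = diagonal (d * p * d) - vecMulVec (d * p) (d * p) := by
  rw [mul_sub, sub_mul, diagonal_mul_diagonal, diagonal_mul_diagonal,
    diagonal_mul_vecMulVec_mul_diagonal, mul_comm p d]
  rfl

theorem trace_one_sub_vecMulVec_self {v : n → R} (hv : v ⬝ᵥ v = 1) :
    trace (1 - vecMulVec v v) = (Fintype.card n : R) - 1 := by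
  rw [trace_sub, trace_one, trace_vecMulVec, hv]

end

theorem of_ite_sub_eq_diagonal_sub_vecMulVec {n R : Type*} [DecidableEq n] [Ring R]
    (p : n → R) :
    (of fun i j => p i * (if i = j then 1 else 0) - p i * p j) = diagonal p - vecMulVec p p := by
  ext i j
  by_cases h : i = j <;> simp [h, vecMulVec_apply]

theorem dotProduct_sqrt_self {n : Type*} [Fintype n] {p : n → ℝ} (hp : ∀ j, 0 ≤ p j) :
    (fun j => √(p j)) ⬝ᵥ (fun j => √(p j)) = ∑ j, p j := by
  simp only [dotProduct, Real.mul_self_sqrt (hp _)]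

theorem stmt_10_general {k : ℕ} (p : Fin k → ℝ) (hp : ∀ j, 0 < p j)
    (hsum : ∑ j, p j = 1) :
    (Matrix.diagonal (fun j => 1 / Real.sqrt (p j))
        * (Matrix.of fun i j : Fin k => p i * (if i = j then 1 else 0) - p i * p j)
        * Matrix.diagonal (fun j => 1 / Real.sqrt (p j))
      = (1 : Matrix (Fin k) (Fin k) ℝ)
          - Matrix.vecMulVec (fun j => Real.sqrt (p j)) (fun j => Real.sqrt (p j)))
    ∧ (((1 : Matrix (Fin k) (Fin k) ℝ)
          - Matrix.vecMulVec (fun j => Real.sqrt (p j)) (fun j => Real.sqrt (p j)))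
        * ((1 : Matrix (Fin k) (Fin k) ℝ)
          - Matrix.vecMulVec (fun j => Real.sqrt (p j)) (fun j => Real.sqrt (p j)))
      = (1 : Matrix (Fin k) (Fin k) ℝ)
          - Matrix.vecMulVec (fun j => Real.sqrt (p j)) (fun j => Real.sqrt (p j)))
    ∧ ((1 : Matrix (Fin k) (Fin k) ℝ)
          - Matrix.vecMulVec (fun j => Real.sqrt (p j)) (fun j => Real.sqrt (p j))).trace
      = (k : ℝ) - 1 := by
  have hunit : (fun j => √(p j)) ⬝ᵥ (fun j => √(p j)) = 1 :=
    (dotProduct_sqrt_self fun j => (hp j).le).trans hsum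
  refine ⟨?_, (isIdempotentElem_vecMulVec_self hunit).one_sub, ?_⟩
  · have hscale : (fun j => 1 / √(p j)) * p = fun j => √(p j) := by
      ext j
      simp only [Pi.mul_apply, one_div_mul_eq_div, Real.div_sqrt]
    have hnormalize : (fun j => 1 / √(p j)) * p * (fun j => 1 / √(p j)) = 1 := by
      rw [hscale]
      ext j
      simp only [Pi.mul_apply, Pi.one_apply, mul_one_div, div_self (Real.sqrt_pos.2 (hp j)).ne']
    rw [of_ite_sub_eq_diagonal_sub_vecMulVec, diagonal_mul_sub_vecMulVec_mul_diagonal,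
      hnormalize, hscale, diagonal_one']
  · rw [trace_one_sub_vecMulVec_self hunit, Fintype.card_fin]

/-- For a positive probability vector `p` on `Fin k` (`k ≥ 1`), with `Γ = diagonal p`,
`Σ i j = p i (if i = j then 1 else 0) − p i p j` and `Ω = 1 − √p √pᵀ`:
(i) `Γ^(−1/2) Σ Γ^(−1/2) = Ω`; (ii) `Ω` is idempotent; (iii) `trace Ω = k − 1`. -/
theorem stmt_10 {k : ℕ} (hk : 1 ≤ k) (p : Fin k → ℝ) (hp : ∀ j, 0 < p j)
    (hsum : ∑ j, p j = 1) :
    (Matrix.diagonal (fun j => 1 / Real.sqrt (p j))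
        * (Matrix.of fun i j : Fin k => p i * (if i = j then 1 else 0) - p i * p j)
        * Matrix.diagonal (fun j => 1 / Real.sqrt (p j))
      = (1 : Matrix (Fin k) (Fin k) ℝ)
          - Matrix.vecMulVec (fun j => Real.sqrt (p j)) (fun j => Real.sqrt (p j)))
    ∧ (((1 : Matrix (Fin k) (Fin k) ℝ)
          - Matrix.vecMulVec (fun j => Real.sqrt (p j)) (fun j => Real.sqrt (p j)))
        * ((1 : Matrix (Fin k) (Fin k) ℝ)
          - Matrix.vecMulVec (fun j => Real.sqrt (p j)) (fun j => Real.sqrt (p j)))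
      = (1 : Matrix (Fin k) (Fin k) ℝ)
          - Matrix.vecMulVec (fun j => Real.sqrt (p j)) (fun j => Real.sqrt (p j)))
    ∧ ((1 : Matrix (Fin k) (Fin k) ℝ)
          - Matrix.vecMulVec (fun j => Real.sqrt (p j)) (fun j => Real.sqrt (p j))).trace
      = (k : ℝ) - 1 :=
  stmt_10_general p hp hsum
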